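/- An n×n symmetric matrix D with zero diagonal is a Euclidean distance matrix (i.e., there exist points x_1,...,x_n in some Euclidean space with d_ij = ‖x_i − x_j‖²) if and only if −CDC ⪰ 0, where C = I_n − (1/n)·11^T is the centering matrix. -/

import Mathlib

open Matrix BigOperators Finset

/-- The centering matrix `C = I - (1/n) 11ᵀ`. -/
noncomputable def centering (n : ℕ) : Matrix (Fin n) (Fin n) ℝ :=
  1 - (n : ℝ)⁻¹ • Matrix.of (fun _ _ => (1 : ℝ))

lemma centering_apply {n : ℕ} (i j : Fin n) :
    centering n i j = (if i = j then 1 else 0) - (n : ℝ)⁻¹ := by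
  simp [centering, Matrix.one_apply, Matrix.sub_apply]

lemma centering_transpose {n : ℕ} : (centering n)ᵀ = centering n := by
  ext i j
  simp [Matrix.transpose_apply, centering_apply, eq_comm]

lemma centering_mul_apply {n : ℕ} (M : Matrix (Fin n) (Fin n) ℝ) (a b : Fin n) :
    (centering n * M) a b = M a b - (n : ℝ)⁻¹ * ∑ k, M k b := by
  simp only [Matrix.mul_apply, centering_apply, sub_mul, ite_mul, one_mul, zero_mul]
  rw [Finset.sum_sub_distrib, Finset.sum_ite_eq Finset.univ a (fun k => M k b)]
  simp [Finset.mul_sum]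

lemma mul_centering_apply {n : ℕ} (M : Matrix (Fin n) (Fin n) ℝ) (a b : Fin n) :
    (M * centering n) a b = M a b - (n : ℝ)⁻¹ * ∑ k, M a k := by
  simp only [Matrix.mul_apply, centering_apply, mul_sub, mul_ite, mul_one, mul_zero]
  rw [Finset.sum_sub_distrib, Finset.sum_ite_eq' Finset.univ b (fun k => M a k)]
  simp [Finset.sum_mul, Finset.mul_sum, mul_comm]

lemma cdc_apply {n : ℕ} (D : Matrix (Fin n) (Fin n) ℝ) (i j : Fin n) :
    (centering n * D * centering n) i j =
      D i j - (n : ℝ)⁻¹ * (∑ k, D k j) - (n : ℝ)⁻¹ * (∑ k, D i k)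
        + (n : ℝ)⁻¹ * ((n : ℝ)⁻¹ * ∑ k, ∑ l, D k l) := by
  rw [mul_centering_apply, centering_mul_apply]
  simp only [centering_mul_apply]
  rw [Finset.sum_sub_distrib, ← Finset.mul_sum]
  rw [Finset.sum_comm]
  ring

lemma my_mul_vecMulVec {n : ℕ} (A : Matrix (Fin n) (Fin n) ℝ) (v w : Fin n → ℝ) :
    A * Matrix.vecMulVec v w = Matrix.vecMulVec (A *ᵥ v) w := by
  ext i j
  simp [Matrix.mul_apply, Matrix.vecMulVec_apply, Matrix.mulVec, dotProduct,
    Finset.sum_mul, mul_assoc]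

lemma my_vecMulVec_mul {n : ℕ} (A : Matrix (Fin n) (Fin n) ℝ) (v w : Fin n → ℝ) :
    Matrix.vecMulVec v w * A = Matrix.vecMulVec v (w ᵥ* A) := by
  ext i j
  simp [Matrix.mul_apply, Matrix.vecMulVec_apply, Matrix.vecMul, dotProduct,
    Finset.mul_sum, mul_assoc]

lemma centering_mulVec_one {n : ℕ} (hn : 0 < n) :
    centering n *ᵥ (fun _ => (1 : ℝ)) = 0 := by
  funext i
  have hn' : (n : ℝ) ≠ 0 := Nat.cast_ne_zero.mpr hn.ne'
  simp [Matrix.mulVec, dotProduct, centering_apply, sub_mul,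
    Finset.sum_sub_distrib, Finset.sum_ite_eq, hn']

lemma one_vecMul_centering {n : ℕ} (hn : 0 < n) :
    (fun _ => (1 : ℝ)) ᵥ* centering n = 0 := by
  funext j
  have hn' : (n : ℝ) ≠ 0 := Nat.cast_ne_zero.mpr hn.ne'
  simp [Matrix.vecMul, dotProduct, centering_apply, mul_sub,
    Finset.sum_sub_distrib, Finset.sum_ite_eq', hn']

/-- a symmetric hollow matrix `D` is a Euclidean distance matrix iff
`-CDC ⪰ 0`, where `C` is the centering matrix. -/
theorem edm_iff_centered_psd {n : ℕ} (hn : 0 < n) (D : Matrix (Fin n) (Fin n) ℝ)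
    (hsymm : D.IsSymm) (hdiag : ∀ i, D i i = 0) :
    (∃ k : ℕ, ∃ x : Fin n → Fin k → ℝ,
        ∀ i j, D i j = ∑ t, (x i t - x j t) ^ 2) ↔
      (-(centering n * D * centering n)).PosSemidef := by
  constructor
  · rintro ⟨k, x, hx⟩
    set X : Matrix (Fin n) (Fin k) ℝ := Matrix.of x with hX
    set q : Fin n → ℝ := fun i => ∑ t, x i t ^ 2 with hq
    have hD : D = Matrix.vecMulVec q (fun _ => 1) + Matrix.vecMulVec (fun _ => 1) q
        - (2:ℝ) • (X * Xᵀ) := by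
      ext i j
      have expand : ∑ t, (x i t - x j t)^2
          = (∑ t, x i t^2) + (∑ t, x j t^2) - 2 * ∑ t, x i t * x j t := by
        rw [Finset.mul_sum, ← Finset.sum_add_distrib, ← Finset.sum_sub_distrib]
        exact Finset.sum_congr rfl (fun t _ => by ring)
      simp only [Matrix.sub_apply, Matrix.add_apply, Matrix.vecMulVec_apply,
        Matrix.smul_apply, Matrix.mul_apply, Matrix.transpose_apply, hX, Matrix.of_apply,
        smul_eq_mul, hq, hx i j, expand]
      ring
    have h1 : centering n * Matrix.vecMulVec q (fun _ => 1) * centering n = 0 := by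
      rw [mul_assoc, my_vecMulVec_mul, one_vecMul_centering hn]
      have : Matrix.vecMulVec q (0 : Fin n → ℝ) = 0 := by
        ext i j; simp [Matrix.vecMulVec_apply]
      rw [this, mul_zero]
    have h2 : centering n * Matrix.vecMulVec (fun _ => 1) q * centering n = 0 := by
      rw [my_mul_vecMulVec, centering_mulVec_one hn]
      have : Matrix.vecMulVec (0 : Fin n → ℝ) q = 0 := by
        ext i j; simp [Matrix.vecMulVec_apply]
      rw [this, zero_mul]
    have hkey : -(centering n * D * centering n)
        = (2:ℝ) • ((centering n * X) * (centering n * X)ᵀ) := by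
      rw [hD, Matrix.transpose_mul, centering_transpose]
      simp only [Matrix.mul_add, Matrix.add_mul, Matrix.mul_sub, Matrix.sub_mul,
        Matrix.mul_smul, Matrix.smul_mul]
      rw [h1, h2]
      simp only [← Matrix.mul_assoc]
      simp
    rw [hkey]
    have hpsd := Matrix.posSemidef_self_mul_conjTranspose (centering n * X)
    have htr : (centering n * X)ᴴ = (centering n * X)ᵀ := by
      ext i j; simp [Matrix.conjTranspose_apply]
    rw [htr] at hpsd
    rw [two_smul]
    exact hpsd.add hpsd
  · intro hpsd
    obtain ⟨B, hB⟩ : ∃ B : Matrix (Fin n) (Fin n) ℝ, -(centering n * D * centering n) = Bᴴ * B := by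
      open scoped MatrixOrder in
      obtain ⟨B, hB⟩ := CStarAlgebra.nonneg_iff_eq_star_mul_self.mp hpsd.nonneg
      exact ⟨B, by rw [hB, Matrix.star_eq_conjTranspose]⟩
    refine ⟨n, fun i t => (Real.sqrt 2)⁻¹ * B t i, fun i j => ?_⟩
    have hM : ∀ a b : Fin n, (∑ t, B t a * B t b)
        = (-(centering n * D * centering n)) a b := by
      intro a b
      rw [hB]
      simp [Matrix.mul_apply, Matrix.conjTranspose_apply, mul_comm]
    have hc : ((Real.sqrt 2)⁻¹ : ℝ)^2 = 2⁻¹ := by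
      rw [inv_pow, Real.sq_sqrt (by norm_num : (0:ℝ) ≤ 2)]
    have hssum : ∀ a : Fin n, (∑ k, D k a) = ∑ k, D a k :=
      fun a => Finset.sum_congr rfl (fun k _ => hsymm.apply a k)
    have expand : ∑ t, ((Real.sqrt 2)⁻¹ * B t i - (Real.sqrt 2)⁻¹ * B t j)^2
        = 2⁻¹ * ((∑ t, B t i * B t i) + (∑ t, B t j * B t j)
            - 2 * ∑ t, B t i * B t j) := by
      rw [← Finset.sum_add_distrib, Finset.mul_sum, ← Finset.sum_sub_distrib,
        Finset.mul_sum]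
      refine Finset.sum_congr rfl (fun t _ => ?_)
      rw [show ((Real.sqrt 2)⁻¹ * B t i - (Real.sqrt 2)⁻¹ * B t j)^2
          = ((Real.sqrt 2)⁻¹)^2 * (B t i * B t i + B t j * B t j
            - 2 * (B t i * B t j)) from by ring, hc]
    rw [expand, hM i i, hM j j, hM i j]
    simp only [Matrix.neg_apply, cdc_apply, hdiag, hssum]
    ring
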